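/- If Γ₀ is a finite-index subgroup of a group Γ and Γ is nilpotent of degree exactly k (k-step nilpotent but not (k−1)-step), then Γ₀ is also nilpotent of degree exactly k, provided Γ is torsion-free. More precisely: in a torsion-free nilpotent group Γ of nilpotency class k, every finite-index subgroup also has nilpotency class k. -/

import Mathlib

/-!
A finite-index subgroup `Γ₀` contains `g ^ n` for a fixed `n > 0` and all `g`. By induction on `i`,
every `y ∈ γᵢ(Γ)` has a positive power in `γᵢ(Γ₀) ⊔ γᵢ₊₁(Γ)`: modulo `γᵢ₊₂(Γ)` the commutator map
is bilinear on `γᵢ(Γ) × Γ`, so `⁅a, g⁆ ^ (m * n) ≡ ⁅a ^ m, g ^ n⁆`, and `γᵢ₊₁(Γ)` is central, so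
the elements having such a power are closed under products. If `Γ₀` had class `< k`, then at
`i = k - 1` both `γᵢ(Γ₀)` and `γᵢ₊₁(Γ)` vanish, so every element of `γₖ₋₁(Γ)` is torsion, hence
trivial, contradicting that `Γ` has class `k`.
-/

open scoped commutatorElement

namespace Subgroup

variable {G : Type*} [Group G]

theorem commutatorElement_mul_left_of_mem_center (a : G) {c : G} (hc : c ∈ center G) (g : G) :
    ⁅a * c, g⁆ = ⁅a, g⁆ := by
  rw [commutatorElement_mul_left_eq_conj_mul,
    commutatorElement_eq_one_iff_commute.mpr (mem_center_iff.mp hc g).symm, mul_one,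
    mul_inv_cancel, one_mul]

theorem commutatorElement_pow_right {a : G} (ha : a ∈ upperCentralSeries G 2) (g : G) (n : ℕ) :
    ⁅a, g ^ n⁆ = ⁅a, g⁆ ^ n := by
  have hcen : ⁅a, g⁆ ∈ center G := by
    rw [← upperCentralSeries_one]; exact mem_upperCentralSeries_succ_iff.mp ha g
  induction n with
  | zero => simp
  | succ n ih =>
    rw [pow_succ, commutatorElement_mul_right_eq_mul_conj, ih, mul_assoc _ (g ^ n),
      mem_center_iff.mp hcen, ← mul_assoc, mul_inv_cancel_right, pow_succ]

theorem commutatorElement_pow_left {a : G} (ha : a ∈ upperCentralSeries G 2) (g : G) (m : ℕ) :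
    ⁅a ^ m, g⁆ = ⁅a, g⁆ ^ m := by
  have hcen : ⁅a, g⁆ ∈ center G := by
    rw [← upperCentralSeries_one]; exact mem_upperCentralSeries_succ_iff.mp ha g
  induction m with
  | zero => simp
  | succ m ih =>
    rw [pow_succ, commutatorElement_mul_left_eq_conj_mul, mem_center_iff.mp hcen,
      mul_inv_cancel_right, ih, pow_succ']

theorem commutatorElement_pow_pow {a : G} (ha : a ∈ upperCentralSeries G 2) (g : G) (m n : ℕ) :
    ⁅a ^ m, g ^ n⁆ = ⁅a, g⁆ ^ (m * n) := by
  rw [commutatorElement_pow_right (pow_mem ha m), commutatorElement_pow_left ha, pow_mul]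

theorem lowerCentralSeries_le_upperCentralSeries {n j : ℕ}
    (h : (⊤ : Subgroup G).lowerCentralSeries (n + j) = ⊥) :
    (⊤ : Subgroup G).lowerCentralSeries n ≤ upperCentralSeries G j := by
  induction j generalizing n with
  | zero => simpa using h.le
  | succ j ih =>
    intro x hx
    rw [mem_upperCentralSeries_succ_iff]
    intro y
    exact ih (n := n + 1) (by rwa [Nat.add_right_comm, Nat.add_assoc])
      (commutator_mem_commutator hx (mem_top y))

def isolator (K : Subgroup G) : Set G := {g | ∃ m, 0 < m ∧ g ^ m ∈ K}

variable {K : Subgroup G}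

theorem one_mem_isolator : (1 : G) ∈ K.isolator := ⟨1, one_pos, by simp [one_mem]⟩

theorem inv_mem_isolator {x : G} (hx : x ∈ K.isolator) : x⁻¹ ∈ K.isolator := by
  obtain ⟨m, hm, hxm⟩ := hx
  exact ⟨m, hm, by rw [inv_pow]; exact inv_mem hxm⟩

theorem _root_.Commute.mul_mem_isolator {x y : G} (hxy : Commute x y) (hx : x ∈ K.isolator)
    (hy : y ∈ K.isolator) : x * y ∈ K.isolator := by
  obtain ⟨m, hm, hxm⟩ := hx
  obtain ⟨l, hl, hyl⟩ := hy
  refine ⟨m * l, Nat.mul_pos hm hl, ?_⟩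
  rw [hxy.mul_pow, pow_mul, mul_comm m l, pow_mul]
  exact mul_mem (pow_mem hxm l) (pow_mem hyl m)

variable {G' : Type*} [Group G'] (f : G →* G')

theorem image_isolator_subset : f '' K.isolator ⊆ (K.map f).isolator := by
  rintro _ ⟨x, ⟨m, hm, hxm⟩, rfl⟩
  exact ⟨m, hm, by rw [← map_pow]; exact mem_map_of_mem f hxm⟩

theorem preimage_isolator_map : f ⁻¹' (K.map f).isolator = (K ⊔ f.ker).isolator := by
  ext x
  simp only [Set.mem_preimage, isolator, Set.mem_ofPred_eq, ← comap_map_eq, mem_comap, map_pow]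

variable {H : Subgroup G} {n : ℕ}

theorem lowerCentralSeries_succ_subset_isolator (hn : 0 < n) (hpow : ∀ g : G, g ^ n ∈ H) {i : ℕ}
    (hbot : (⊤ : Subgroup G).lowerCentralSeries (i + 2) = ⊥)
    (hi : ((⊤ : Subgroup G).lowerCentralSeries i : Set G) ⊆
      (H.lowerCentralSeries i ⊔ (⊤ : Subgroup G).lowerCentralSeries (i + 1)).isolator) :
    ((⊤ : Subgroup G).lowerCentralSeries (i + 1) : Set G) ⊆
      (H.lowerCentralSeries (i + 1)).isolator := by
  have hcen : (⊤ : Subgroup G).lowerCentralSeries (i + 1) ≤ center G := by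
    rw [← upperCentralSeries_one]; exact lowerCentralSeries_le_upperCentralSeries hbot
  have hucs : (⊤ : Subgroup G).lowerCentralSeries i ≤ upperCentralSeries G 2 :=
    lowerCentralSeries_le_upperCentralSeries hbot
  intro y hy
  induction hy using closure_induction with
  | mem y hy =>
    obtain ⟨a, ha, g, -, rfl⟩ := hy
    obtain ⟨m, hm, ham⟩ := hi ha
    obtain ⟨w, hw, c, hc, hwc⟩ := mem_sup_of_normal_right.mp ham
    refine ⟨m * n, Nat.mul_pos hm hn, ?_⟩
    rw [← commutatorElement_pow_pow (hucs ha), ← hwc,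
      commutatorElement_mul_left_of_mem_center w (hcen hc)]
    exact commutator_mem_commutator hw (hpow g)
  | one => exact one_mem_isolator
  | mul x y hx hy hxK hyK =>
    exact Commute.mul_mem_isolator (mem_center_iff.mp (hcen hy) x) hxK hyK
  | inv x _ hxK => exact inv_mem_isolator hxK

theorem lowerCentralSeries_subset_isolator (hn : 0 < n) (hpow : ∀ g : G, g ^ n ∈ H) (i : ℕ) :
    ((⊤ : Subgroup G).lowerCentralSeries i : Set G) ⊆
      (H.lowerCentralSeries i ⊔ (⊤ : Subgroup G).lowerCentralSeries (i + 1)).isolator := by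
  induction i with
  | zero => exact fun y _ ↦ ⟨n, hn, mem_sup_left (hpow y)⟩
  | succ i ih =>
    let N := (⊤ : Subgroup G).lowerCentralSeries (i + 2)
    let π := QuotientGroup.mk' N
    have hπ : Function.Surjective π := QuotientGroup.mk'_surjective N
    have hlcs (j : ℕ) : ((⊤ : Subgroup G).lowerCentralSeries j).map π =
        (⊤ : Subgroup (G ⧸ N)).lowerCentralSeries j := by
      rw [map_lowerCentralSeries, map_top_of_surjective π hπ]
    have hpow' (q : G ⧸ N) : q ^ n ∈ H.map π := by
      obtain ⟨g, rfl⟩ := hπ q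
      rw [← map_pow]
      exact mem_map_of_mem π (hpow g)
    have hbot : (⊤ : Subgroup (G ⧸ N)).lowerCentralSeries (i + 2) = ⊥ := by
      rw [← hlcs, QuotientGroup.map_mk'_self]
    have hi : ((⊤ : Subgroup (G ⧸ N)).lowerCentralSeries i : Set (G ⧸ N)) ⊆
        ((H.map π).lowerCentralSeries i ⊔
          (⊤ : Subgroup (G ⧸ N)).lowerCentralSeries (i + 1)).isolator := by
      rw [← hlcs i]
      rintro _ ⟨y, hy, rfl⟩
      have := image_isolator_subset π ⟨y, ih hy, rfl⟩
      rwa [map_sup, map_lowerCentralSeries, hlcs] at this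
    intro y hy
    have hπy := lowerCentralSeries_succ_subset_isolator hn hpow' hbot hi
      (hlcs (i + 1) ▸ mem_map_of_mem π hy)
    rwa [← map_lowerCentralSeries, ← Set.mem_preimage, preimage_isolator_map,
      QuotientGroup.ker_mk'] at hπy

theorem lowerCentralSeries_eq_bot_of_pow_mem
    (htf : ∀ g : G, g ≠ 1 → ∀ m : ℕ, 0 < m → g ^ m ≠ 1) (hn : 0 < n) (hpow : ∀ g : G, g ^ n ∈ H)
    {i : ℕ} (hH : H.lowerCentralSeries i = ⊥)
    (hG : (⊤ : Subgroup G).lowerCentralSeries (i + 1) = ⊥) :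
    (⊤ : Subgroup G).lowerCentralSeries i = ⊥ := by
  refine (eq_bot_iff_forall _).mpr fun y hy ↦ ?_
  obtain ⟨m, hm, hym⟩ := lowerCentralSeries_subset_isolator hn hpow i hy
  rw [hH, hG, bot_sup_eq, mem_bot] at hym
  by_contra hy1
  exact htf y hy1 m hm hym

theorem nilpotencyClass_eq_of_pow_mem [Group.IsNilpotent G]
    (htf : ∀ g : G, g ≠ 1 → ∀ m : ℕ, 0 < m → g ^ m ≠ 1) (hn : 0 < n) (hpow : ∀ g : G, g ^ n ∈ H) :
    Group.nilpotencyClass H = Group.nilpotencyClass G := by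
  refine le_antisymm (nilpotencyClass_le H) (not_lt.mp fun hlt ↦ ?_)
  have hG : (⊤ : Subgroup G).lowerCentralSeries (Group.nilpotencyClass G - 1 + 1) = ⊥ := by
    rw [Nat.sub_add_cancel (by omega), lowerCentralSeries_nilpotencyClass]
  have hH : H.lowerCentralSeries (Group.nilpotencyClass G - 1) = ⊥ :=
    lowerCentralSeries_eq_bot_of_nilpotencyClass_le (by omega)
  have := lowerCentralSeries_eq_bot_iff_nilpotencyClass_le.mp
    (lowerCentralSeries_eq_bot_of_pow_mem htf hn hpow hH hG)
  omega

theorem exists_pow_mem_of_finiteIndex (H : Subgroup G) [H.FiniteIndex] :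
    ∃ n, 0 < n ∧ ∀ g : G, g ^ n ∈ H :=
  ⟨H.normalCore.index, Nat.pos_of_ne_zero FiniteIndex.index_ne_zero,
    fun g ↦ H.normalCore_le (H.normalCore.pow_index_mem g)⟩

end Subgroup

/-- In a torsion-free nilpotent group `Γ` of nilpotency class exactly
`k`, every finite-index subgroup `Γ₀` also has nilpotency class exactly `k`. -/
theorem nilpotencyClass_of_finiteIndex_subgroup {Γ : Type*} [Group Γ] [Group.IsNilpotent Γ]
    (htf : ∀ g : Γ, g ≠ 1 → ∀ m : ℕ, 0 < m → g ^ m ≠ 1)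
    (k : ℕ) (hk : Group.nilpotencyClass Γ = k)
    (Γ₀ : Subgroup Γ) (hfi : 0 < Γ₀.index) :
    Group.nilpotencyClass Γ₀ = k := by
  have : Γ₀.FiniteIndex := ⟨hfi.ne'⟩
  obtain ⟨n, hn, hpow⟩ := Γ₀.exists_pow_mem_of_finiteIndex
  rw [← hk]
  exact Subgroup.nilpotencyClass_eq_of_pow_mem htf hn hpow
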